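/- Let f: ℝ^p → ℝ be differentiable and let σ_f, σ_{−f} ∈ ℝ be such that f − (σ_f/2)‖·‖² and −f − (σ_{−f}/2)‖·‖² are convex, and let γ > 0 satisfy 1 + γσ_{−f} > 0. Then for all s, s′ ∈ ℝ^p, writing u = prox_{−γf}(s) and u′ = prox_{−γf}(s′) (the unique minimizers of w ↦ −f(w) + (1/(2γ))‖w − ·‖²), one has (1/(1 − γσ_f))‖s − s′‖² ≤ ⟨u − u′, s − s′⟩ ≤ (1/(1 + γσ_{−f}))‖s − s′‖². -/

import Mathlib

open scoped InnerProductSpace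
noncomputable section

/-- `ℝ^p` as a Euclidean space. -/
abbrev Euc (p : ℕ) := EuclideanSpace ℝ (Fin p)

variable {p : ℕ}

/-- `u` minimizes `w ↦ −f(w) + (1/(2γ))‖w − s‖²` (for real-valued `f`). -/
def NegProxObjMin (f : Euc p → ℝ) (γ : ℝ) (s u : Euc p) : Prop :=
  ∀ w, -f u + 1/(2*γ) * ‖u - s‖^2 ≤ -f w + 1/(2*γ) * ‖w - s‖^2

/-!
With `ψ = ½‖·‖² − γ f`, the optimality condition of the prox problem reads `s = ∇ψ(u)`, so
`prox_{−γf}` inverts `∇ψ`. The two convexity hypotheses say that `ψ` is `μ`-strongly convex and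
`L`-smooth, with `μ = 1 + γσ_{−f}` and `L = 1 − γσ_f`. The lower bound is then the Baillon–Haddad
cocoercivity `‖∇ψ(u) − ∇ψ(u')‖² ≤ L ⟪u − u', ∇ψ(u) − ∇ψ(u')⟫`, and the upper bound is strong
monotonicity `μ ‖u − u'‖² ≤ ⟪u − u', ∇ψ(u) − ∇ψ(u')⟫` combined with Cauchy–Schwarz.
-/

open InnerProductSpace Set

section Gradient

variable {E : Type*} [NormedAddCommGroup E] [InnerProductSpace ℝ E]

theorem real_inner_sub_sub_eq_neg_sub (a b x y : E) :
    ⟪x - y, a - b⟫_ℝ = -⟪a, y - x⟫_ℝ - ⟪b, x - y⟫_ℝ := by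
  rw [← neg_sub x y, inner_neg_right, real_inner_comm, inner_sub_left]
  ring

variable [CompleteSpace E] {h : E → ℝ} {a b x y : E}

theorem HasGradientAt.neg (hh : HasGradientAt h a x) : HasGradientAt (fun w => -h w) (-a) x := by
  rw [hasGradientAt_iff_hasFDerivAt, map_neg]
  exact hasGradientAt_iff_hasFDerivAt.1 hh |>.neg

theorem HasGradientAt.sub {g : E → ℝ} (hh : HasGradientAt h a x) (hg : HasGradientAt g b x) :
    HasGradientAt (fun w => h w - g w) (a - b) x := by
  rw [hasGradientAt_iff_hasFDerivAt, map_sub]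
  exact (hasGradientAt_iff_hasFDerivAt.1 hh).sub (hasGradientAt_iff_hasFDerivAt.1 hg)

theorem HasGradientAt.const_mul (hh : HasGradientAt h a x) (c : ℝ) :
    HasGradientAt (fun w => c * h w) (c • a) x := by
  rw [hasGradientAt_iff_hasFDerivAt, map_smulₛₗ]
  exact (hasGradientAt_iff_hasFDerivAt.1 hh).const_mul c

theorem hasGradientAt_norm_sq (x : E) : HasGradientAt (fun w => ‖w‖ ^ 2) ((2 : ℝ) • x) x := by
  rw [hasGradientAt_iff_hasFDerivAt]
  refine (hasStrictFDerivAt_norm_sq x).hasFDerivAt.congr_fderiv ?_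
  ext
  simp [toDual_apply_apply]

theorem hasGradientAt_inner_left (v x : E) : HasGradientAt (fun w => ⟪v, w⟫_ℝ) v x :=
  hasGradientAt_iff_hasFDerivAt.2 (toDual ℝ E v).hasFDerivAt

theorem IsLocalMin.hasGradientAt_eq_zero (hmin : IsLocalMin h x) (hh : HasGradientAt h a x) :
    a = 0 :=
  (toDual ℝ E).map_eq_zero_iff.1 (hmin.hasFDerivAt_eq_zero (hasGradientAt_iff_hasFDerivAt.1 hh))

theorem ConvexOn.add_inner_le_of_hasGradientAt (hh : ConvexOn ℝ univ h)
    (ha : HasGradientAt h a x) (y : E) : h x + ⟪a, y - x⟫_ℝ ≤ h y := by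
  have hline : HasDerivAt (h ∘ AffineMap.lineMap x y) ⟪a, y - x⟫_ℝ (0 : ℝ) :=
    (hasGradientAt_iff_hasFDerivAt.1 ha).comp_hasDerivAt_of_eq (0 : ℝ)
      AffineMap.hasDerivAt_lineMap (by simp)
  have := (hh.comp_affineMap (AffineMap.lineMap x y)).le_slope_of_hasDerivAt
    (mem_univ 0) (mem_univ 1) one_pos hline
  simp only [slope_def_field, Function.comp_apply, AffineMap.lineMap_apply_one,
    AffineMap.lineMap_apply_zero, sub_zero, div_one] at this
  linarith

theorem StrongConvexOn.add_inner_add_le_of_hasGradientAt {m : ℝ} (hh : StrongConvexOn univ m h)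
    (ha : HasGradientAt h a x) (y : E) : h x + ⟪a, y - x⟫_ℝ + m / 2 * ‖y - x‖ ^ 2 ≤ h y := by
  have key := (strongConvexOn_iff_convex.1 hh).add_inner_le_of_hasGradientAt
    (ha.sub ((hasGradientAt_norm_sq x).const_mul (m / 2))) y
  have hy : ‖y‖ ^ 2 = ‖x‖ ^ 2 + 2 * ⟪x, y - x⟫_ℝ + ‖y - x‖ ^ 2 := by
    rw [← norm_add_sq_real, add_sub_cancel]
  rw [inner_sub_left, real_inner_smul_left, real_inner_smul_left, hy] at key
  linarith

theorem StrongConvexOn.mul_norm_sq_le_inner_of_hasGradientAt {m : ℝ}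
    (hh : StrongConvexOn univ m h) (ha : HasGradientAt h a x) (hb : HasGradientAt h b y) :
    m * ‖x - y‖ ^ 2 ≤ ⟪x - y, a - b⟫_ℝ := by
  have hxy := hh.add_inner_add_le_of_hasGradientAt ha y
  have hyx := hh.add_inner_add_le_of_hasGradientAt hb x
  rw [norm_sub_rev] at hxy
  have := real_inner_sub_sub_eq_neg_sub a b x y
  linarith

theorem StrongConvexOn.inner_le_one_div_mul_norm_sq_of_hasGradientAt {m : ℝ}
    (hh : StrongConvexOn univ m h) (hm : 0 < m) (ha : HasGradientAt h a x)
    (hb : HasGradientAt h b y) :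
    ⟪x - y, a - b⟫_ℝ ≤ 1 / m * ‖a - b‖ ^ 2 := by
  have hmono := hh.mul_norm_sq_le_inner_of_hasGradientAt ha hb
  have hcs := real_inner_le_norm (x - y) (a - b)
  rw [one_div, ← div_eq_inv_mul, le_div_iff₀ hm]
  nlinarith [sq_nonneg (‖a - b‖ - m * ‖x - y‖), mul_le_mul_of_nonneg_left hmono hm.le,
    norm_nonneg (x - y), norm_nonneg (a - b)]

variable {L : ℝ}

theorem ConvexOn.le_add_inner_add_of_hasGradientAt
    (hsm : ConvexOn ℝ univ (fun w => L / 2 * ‖w‖ ^ 2 - h w)) (hb : HasGradientAt h b y) (z : E) :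
    h z ≤ h y + ⟪b, z - y⟫_ℝ + L / 2 * ‖z - y‖ ^ 2 := by
  have hneg : StrongConvexOn univ (-L) (fun w => -h w) := by
    rw [strongConvexOn_iff_convex]
    convert hsm using 2 with w
    ring
  have := hneg.add_inner_add_le_of_hasGradientAt hb.neg z
  rw [inner_neg_left] at this
  linarith

theorem ConvexOn.inner_le_mul_norm_sq_of_hasGradientAt
    (hsm : ConvexOn ℝ univ (fun w => L / 2 * ‖w‖ ^ 2 - h w)) (ha : HasGradientAt h a x)
    (hb : HasGradientAt h b y) :
    ⟪x - y, a - b⟫_ℝ ≤ L * ‖x - y‖ ^ 2 := by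
  have hxy := hsm.le_add_inner_add_of_hasGradientAt hb x
  have hyx := hsm.le_add_inner_add_of_hasGradientAt ha y
  rw [norm_sub_rev] at hyx
  have := real_inner_sub_sub_eq_neg_sub a b x y
  linarith

theorem ConvexOn.add_inner_add_norm_sq_le_of_hasGradientAt (hh : ConvexOn ℝ univ h) (hL : 0 < L)
    (hsm : ConvexOn ℝ univ (fun w => L / 2 * ‖w‖ ^ 2 - h w)) (ha : HasGradientAt h a x)
    (hb : HasGradientAt h b y) :
    h x + ⟪a, y - x⟫_ℝ + 1 / (2 * L) * ‖b - a‖ ^ 2 ≤ h y := by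
  set z := y - L⁻¹ • (b - a) with hz
  have hx := hh.add_inner_le_of_hasGradientAt ha z
  have hy := hsm.le_add_inner_add_of_hasGradientAt hb z
  have hzx : z - x = (y - x) - L⁻¹ • (b - a) := by rw [hz]; abel
  have hzy : z - y = -(L⁻¹ • (b - a)) := by rw [hz]; abel
  rw [hzx, inner_sub_right, real_inner_smul_right] at hx
  rw [hzy, inner_neg_right, real_inner_smul_right, norm_neg, norm_smul, mul_pow,
    Real.norm_eq_abs, sq_abs] at hy
  have hba : ⟪b, b - a⟫_ℝ - ⟪a, b - a⟫_ℝ = ‖b - a‖ ^ 2 := by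
    rw [← inner_sub_left, real_inner_self_eq_norm_sq]
  have hstep : L / 2 * (L⁻¹ ^ 2 * ‖b - a‖ ^ 2)
      = L⁻¹ * ‖b - a‖ ^ 2 - 1 / (2 * L) * ‖b - a‖ ^ 2 := by
    field_simp
    ring
  have hcancel : L⁻¹ * ⟪b, b - a⟫_ℝ - L⁻¹ * ⟪a, b - a⟫_ℝ = L⁻¹ * ‖b - a‖ ^ 2 := by
    rw [← mul_sub, hba]
  linarith

theorem ConvexOn.one_div_mul_norm_sq_le_inner_of_hasGradientAt (hh : ConvexOn ℝ univ h)
    (hL : 0 < L) (hsm : ConvexOn ℝ univ (fun w => L / 2 * ‖w‖ ^ 2 - h w))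
    (ha : HasGradientAt h a x) (hb : HasGradientAt h b y) :
    1 / L * ‖a - b‖ ^ 2 ≤ ⟪x - y, a - b⟫_ℝ := by
  have hxy := hh.add_inner_add_norm_sq_le_of_hasGradientAt hL hsm ha hb
  have hyx := hh.add_inner_add_norm_sq_le_of_hasGradientAt hL hsm hb ha
  rw [norm_sub_rev] at hxy
  have := real_inner_sub_sub_eq_neg_sub a b x y
  rw [show 1 / L = 2 * (1 / (2 * L)) by field_simp]
  linarith

end Gradient

theorem NegProxObjMin.hasGradientAt {f : Euc p → ℝ} {γ : ℝ} {s u : Euc p}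
    (hu : NegProxObjMin f γ s u) (hf : DifferentiableAt ℝ f u) (hγ : 0 < γ) :
    HasGradientAt (fun w => 1 / 2 * ‖w‖ ^ 2 - γ * f w) s u := by
  set ψ : Euc p → ℝ := fun w => 1 / 2 * ‖w‖ ^ 2 - γ * f w
  have hscale : ∀ w,
      γ * (-f w + 1 / (2 * γ) * ‖w - s‖ ^ 2) = ψ w - ⟪s, w⟫_ℝ + 1 / 2 * ‖s‖ ^ 2 := by
    intro w
    rw [norm_sub_sq_real, real_inner_comm]
    field_simp
    ring
  have hmin : IsLocalMin (fun w => ψ w - ⟪s, w⟫_ℝ) u := Filter.Eventually.of_forall fun w => by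
    have := mul_le_mul_of_nonneg_left (hu w) hγ.le
    rw [hscale, hscale] at this
    linarith
  have hψ := ((hasGradientAt_norm_sq u).const_mul (1 / 2)).sub (hf.hasGradientAt.const_mul γ)
  have hcrit := hmin.hasGradientAt_eq_zero (hψ.sub (hasGradientAt_inner_left s u))
  exact sub_eq_zero.1 hcrit ▸ hψ

/-- with `f − (σ_f/2)‖·‖²` and `−f − (σ_{−f}/2)‖·‖²` convex and `1 + γσ_{−f} > 0`,
for `u = prox_{−γf}(s)`, `u′ = prox_{−γf}(s′)` one has
`(1/(1 − γσ_f))‖s − s′‖² ≤ ⟨u − u′, s − s′⟩ ≤ (1/(1 + γσ_{−f}))‖s − s′‖²`. -/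
theorem statement8
    (f : Euc p → ℝ) (hf : Differentiable ℝ f)
    (σf σnf : ℝ)
    (hconvf : ConvexOn ℝ Set.univ (fun x => f x - σf/2 * ‖x‖^2))
    (hconvnf : ConvexOn ℝ Set.univ (fun x => -f x - σnf/2 * ‖x‖^2))
    (γ : ℝ) (hγ : 0 < γ) (hγσ : 0 < 1 + γ * σnf)
    (s s' u u' : Euc p)
    (hu : NegProxObjMin f γ s u) (hu' : NegProxObjMin f γ s' u') :
    1/(1 - γ * σf) * ‖s - s'‖^2 ≤ ⟪u - u', s - s'⟫_ℝ ∧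
      ⟪u - u', s - s'⟫_ℝ ≤ 1/(1 + γ * σnf) * ‖s - s'‖^2 := by
  set ψ : Euc p → ℝ := fun w => 1 / 2 * ‖w‖ ^ 2 - γ * f w
  have hs : HasGradientAt ψ s u := hu.hasGradientAt (hf u) hγ
  have hs' : HasGradientAt ψ s' u' := hu'.hasGradientAt (hf u') hγ
  have hstrong : StrongConvexOn univ (1 + γ * σnf) ψ := by
    rw [strongConvexOn_iff_convex]
    refine (hconvnf.smul hγ.le).congr fun w _ => ?_
    simp only [ψ, smul_eq_mul]
    ring
  have hsmooth : ConvexOn ℝ univ (fun w => (1 - γ * σf) / 2 * ‖w‖ ^ 2 - ψ w) := by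
    refine (hconvf.smul hγ.le).congr fun w _ => ?_
    simp only [ψ, smul_eq_mul]
    ring
  -- `1 - γ * σf ≥ 1 + γ * σnf > 0` is only forced by a pair of distinct points.
  rcases eq_or_ne u u' with rfl | hne
  · obtain rfl := hs.unique hs'
    simp
  have hL : 0 < 1 - γ * σf := by
    have hlow := hstrong.mul_norm_sq_le_inner_of_hasGradientAt hs hs'
    have hup := hsmooth.inner_le_mul_norm_sq_of_hasGradientAt hs hs'
    have hd : 0 < ‖u - u'‖ ^ 2 := by positivity [sub_ne_zero.2 hne]
    nlinarith
  have hconv : ConvexOn ℝ univ ψ := strongConvexOn_zero.1 (hstrong.mono hγσ.le)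
  exact ⟨hconv.one_div_mul_norm_sq_le_inner_of_hasGradientAt hL hsmooth hs hs',
    hstrong.inner_le_one_div_mul_norm_sq_of_hasGradientAt hγσ hs hs'⟩
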